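/- For every 0 ≤ ε < 1, the function p : ℝ⁴ → ℝ given by the ellipse Ptolemy ratio is differentiable at the point (0, π/2, π, 3π/2) and its gradient (total derivative) there is zero; that is, (0, π/2, π, 3π/2) is a critical point of p. -/

import Mathlib

open Real

/-- The point `(cos θ, √(1 - ε²) · sin θ)` on the ellipse `x² + y²/(1-ε²) = 1`. -/
noncomputable def ellipsePoint (ε θ : ℝ) : EuclideanSpace ℝ (Fin 2) :=
  !₂[Real.cos θ, Real.sqrt (1 - ε ^ 2) * Real.sin θ]

/-- The Ptolemy ratio of four points in the Euclidean plane. -/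
noncomputable def ptolemyRatio (v₁ v₂ v₃ v₄ : EuclideanSpace ℝ (Fin 2)) : ℝ :=
  (‖v₁ - v₂‖ * ‖v₃ - v₄‖ + ‖v₁ - v₄‖ * ‖v₂ - v₃‖) / (‖v₁ - v₃‖ * ‖v₂ - v₄‖)

/-- The ellipse Ptolemy ratio as a function of the four angles, `p : ℝ⁴ → ℝ`. -/
noncomputable def ellipseRatioFun (ε : ℝ) : EuclideanSpace ℝ (Fin 4) → ℝ :=
  fun θ => ptolemyRatio (ellipsePoint ε (θ 0)) (ellipsePoint ε (θ 1))
    (ellipsePoint ε (θ 2)) (ellipsePoint ε (θ 3))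

/-! At `(0, π/2, π, 3π/2)` the four points `(±1, 0)`, `(0, ±b)` form a rhombus with side
`s = √(1 + b²)`, and the tangent to the ellipse at each vertex is orthogonal to the diagonal
through it, so both diagonals are stationary. The derivative of the numerator is then `s` times
the sum of the derivatives of the four sides, and moving a vertex changes its two adjacent sides
by opposite amounts, so this sum vanishes too. -/

section

variable {E F : Type*} [NormedAddCommGroup E] [NormedSpace ℝ E]
  [NormedAddCommGroup F] [InnerProductSpace ℝ F]

theorem HasFDerivAt.norm {f : E → F} {f' : E →L[ℝ] F} {x : E} (hf : HasFDerivAt f f' x)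
    (h0 : f x ≠ 0) : HasFDerivAt (fun y => ‖f y‖) (‖f x‖⁻¹ • (innerSL ℝ (f x)).comp f') x := by
  have hpos : 0 < ‖f x‖ := norm_pos_iff.2 h0
  have hsqrt : (fun y => ‖f y‖) = Real.sqrt ∘ fun y => ‖f y‖ ^ 2 := by
    funext y
    simp [Real.sqrt_sq (norm_nonneg _)]
  rw [hsqrt]
  refine ((hasDerivAt_sqrt (by positivity)).comp_hasFDerivAt x hf.norm_sq).congr_fderiv ?_
  rw [Real.sqrt_sq hpos.le]
  module

theorem hasFDerivAt_norm_sub_comp_apply {ι : Type*} [Fintype ι] {γ : ℝ → F} {γ'ᵢ γ'ⱼ : F}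
    {x : EuclideanSpace ℝ ι} {i j : ι} (hi : HasDerivAt γ γ'ᵢ (x i))
    (hj : HasDerivAt γ γ'ⱼ (x j)) (hne : γ (x i) ≠ γ (x j)) :
    HasFDerivAt (fun θ : EuclideanSpace ℝ ι => ‖γ (θ i) - γ (θ j)‖)
      (‖γ (x i) - γ (x j)‖⁻¹ • (inner ℝ (γ (x i) - γ (x j)) γ'ᵢ • EuclideanSpace.proj (𝕜 := ℝ) i -
        inner ℝ (γ (x i) - γ (x j)) γ'ⱼ • EuclideanSpace.proj (𝕜 := ℝ) j)) x := by
  have hi' := hi.hasFDerivAt.comp x (EuclideanSpace.proj (𝕜 := ℝ) i).hasFDerivAt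
  have hj' := hj.hasFDerivAt.comp x (EuclideanSpace.proj (𝕜 := ℝ) j).hasFDerivAt
  refine ((hi'.sub hj').norm (sub_ne_zero.2 hne)).congr_fderiv ?_
  congr 1
  ext v
  simp only [ContinuousLinearMap.comp_apply, sub_apply, smul_apply,
    ContinuousLinearMap.toSpanSingleton_apply, coe_innerSL_apply, PiLp.proj_apply,
    EuclideanSpace.coe_proj, Pi.sub_apply, Function.comp_apply, inner_sub_left, inner_sub_right,
    inner_smul_right, smul_eq_mul]
  ring

theorem hasFDerivAt_mul_add_mul_div_mul_eq_zero {a b c d g h : E → ℝ} {a' b' c' d' : E →L[ℝ] ℝ}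
    {x : E} {s : ℝ} (ha : HasFDerivAt a a' x) (hb : HasFDerivAt b b' x) (hc : HasFDerivAt c c' x)
    (hd : HasFDerivAt d d' x) (hg : HasFDerivAt g (0 : E →L[ℝ] ℝ) x)
    (hh : HasFDerivAt h (0 : E →L[ℝ] ℝ) x) (has : a x = s) (hbs : b x = s) (hcs : c x = s)
    (hds : d x = s) (hsum : a' + b' + c' + d' = 0) (hgh : g x * h x ≠ 0) :
    HasFDerivAt (fun y => (a y * b y + c y * d y) / (g y * h y)) (0 : E →L[ℝ] ℝ) x := by
  have hnum : HasFDerivAt (fun y => a y * b y + c y * d y) (0 : E →L[ℝ] ℝ) x := by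
    refine ((ha.fun_mul hb).add (hc.fun_mul hd)).congr_fderiv ?_
    rw [has, hbs, hcs, hds]
    linear_combination (norm := module) s • hsum
  have hden : HasFDerivAt (fun y => g y * h y) (0 : E →L[ℝ] ℝ) x :=
    (hg.fun_mul hh).congr_fderiv (by simp)
  simp only [div_eq_mul_inv]
  exact (hnum.fun_mul ((hasDerivAt_inv hgh).comp_hasFDerivAt x hden)).congr_fderiv (by simp)

end

noncomputable def ellipseTangent (ε θ : ℝ) : EuclideanSpace ℝ (Fin 2) :=
  !₂[-sin θ, √(1 - ε ^ 2) * cos θ]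

theorem hasDerivAt_ellipsePoint (ε θ : ℝ) :
    HasDerivAt (ellipsePoint ε) (ellipseTangent ε θ) θ := by
  have hsplit (a b : ℝ) :
      !₂[a, b] = a • EuclideanSpace.single 0 1 + b • EuclideanSpace.single 1 1 := by
    ext i
    fin_cases i <;> simp
  have hpoint : ellipsePoint ε = fun t => cos t • EuclideanSpace.single 0 1 +
      (√(1 - ε ^ 2) * sin t) • EuclideanSpace.single 1 1 := by
    funext t
    exact hsplit _ _
  rw [hpoint, ellipseTangent, hsplit]
  exact ((hasDerivAt_cos θ).smul_const _).add (((hasDerivAt_sin θ).const_mul _).smul_const _)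

section

variable {ε : ℝ}

theorem inner_ellipsePoint_sub_ellipseTangent (hε : ε ^ 2 ≤ 1) (α β t : ℝ) :
    inner ℝ (ellipsePoint ε α - ellipsePoint ε β) (ellipseTangent ε t) =
      -(cos α - cos β) * sin t + (1 - ε ^ 2) * (sin α - sin β) * cos t := by
  simp only [ellipsePoint, ellipseTangent, EuclideanSpace.inner_eq_star_dotProduct, dotProduct,
    Fin.sum_univ_two, WithLp.ofLp_sub, Pi.sub_apply, Pi.star_apply, star_trivial,
    Matrix.cons_val_zero, Matrix.cons_val_one]
  linear_combination (cos t * (sin α - sin β)) * Real.sq_sqrt (sub_nonneg.2 hε)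

theorem norm_ellipsePoint_sub (hε : ε ^ 2 ≤ 1) (α β : ℝ) :
    ‖ellipsePoint ε α - ellipsePoint ε β‖ =
      √((cos α - cos β) ^ 2 + (1 - ε ^ 2) * (sin α - sin β) ^ 2) := by
  simp only [ellipsePoint, EuclideanSpace.norm_eq, PiLp.sub_apply, norm_eq_abs, sq_abs,
    Fin.sum_univ_two, Matrix.cons_val_zero, Matrix.cons_val_one]
  congr 1
  linear_combination (sin α - sin β) ^ 2 * Real.sq_sqrt (sub_nonneg.2 hε)

end

/-- `p` is differentiable at `(0, π/2, π, 3π/2)` with total derivative (gradient) zero. -/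
theorem stmt3 (ε : ℝ) (hε0 : 0 ≤ ε) (hε1 : ε < 1) :
    HasFDerivAt (ellipseRatioFun ε) (0 : EuclideanSpace ℝ (Fin 4) →L[ℝ] ℝ)
      (!₂[0, π / 2, π, 3 * π / 2] : EuclideanSpace ℝ (Fin 4)) := by
  have habs : |ε| < 1 := abs_lt.2 ⟨by linarith, hε1⟩
  have hε : ε ^ 2 < 1 := (sq_lt_one_iff_abs_lt_one ε).2 habs
  have hside : 0 < 1 + (1 - ε ^ 2) := by linarith
  have hcos : cos (3 * π / 2) = 0 := by
    rw [show 3 * π / 2 = π / 2 + π by ring, cos_add_pi, cos_pi_div_two, neg_zero]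
  have hsin : sin (3 * π / 2) = -1 := by
    rw [show 3 * π / 2 = π / 2 + π by ring, sin_add_pi, sin_pi_div_two]
  set x : EuclideanSpace ℝ (Fin 4) := !₂[0, π / 2, π, 3 * π / 2]
  have chord (i j : Fin 4)
      (hij : 0 < (cos (x i) - cos (x j)) ^ 2 + (1 - ε ^ 2) * (sin (x i) - sin (x j)) ^ 2) :=
    hasFDerivAt_norm_sub_comp_apply (hasDerivAt_ellipsePoint ε (x i))
      (hasDerivAt_ellipsePoint ε (x j))
      (by rwa [ne_eq, ← sub_eq_zero, ← norm_eq_zero, norm_ellipsePoint_sub hε.le, sqrt_eq_zero',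
        not_le])
  refine hasFDerivAt_mul_add_mul_div_mul_eq_zero (s := √(1 + (1 - ε ^ 2)))
    (chord 0 1 ?_) (chord 2 3 ?_) (chord 0 3 ?_) (chord 1 2 ?_)
    ((chord 0 2 ?_).congr_fderiv ?_) ((chord 1 3 ?_).congr_fderiv ?_) ?_ ?_ ?_ ?_ ?_ ?_
  -- what is left is the evaluation of chord lengths and their derivatives at the four vertices
  all_goals simp [x, norm_ellipsePoint_sub hε.le, inner_ellipsePoint_sub_ellipseTangent hε.le,
    hcos, hsin, habs, hside, sqrt_eq_zero']
  module
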